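/- Let 𝒜 be the set of positive roots of a deformed root system in ℝ^N with multiplicities m_α (as defined by Sergeev–Veselov, satisfying their main identity), and consider the deformed Calogero-Moser operator L_𝒜 = −Δ + ∑_{α∈𝒜} m_α(m_α+1)(α,α)/(α,x)² + x². Then the function ψ_0 = ∏_{α∈𝒜}(α,x)^{−m_α} e^{−x²/2} satisfies L_𝒜 ψ_0 = λ_0 ψ_0 with eigenvalue λ_0 = N − 2∑_{α∈𝒜} m_α. -/

import Mathlib

/-!
Off the hyperplanes `(α,x) = 0`, `ψ₀` has logarithmic gradient
`g = -∑_α m_α α/(α,x) - x`, so `Δψ₀ = (|g|² + div g) ψ₀`. In `|g|²` the cross terms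
`α ≠ β` cancel by the Sergeev–Veselov identity, while the diagonal terms together with
`div g = ∑_α m_α (α,α)/(α,x)² - N` produce the potential
`∑_α m_α(m_α+1)(α,α)/(α,x)²`; Euler's relation `((α/(α,x)), x) = 1` turns the terms
mixing the two parts of `g` into `2∑_α m_α`, and what is left is `x² - N`.
-/

open Finset
open scoped Classical

noncomputable section

/-- The standard dot product on `ℝ^N`. -/
def dotR {N : ℕ} (x y : Fin N → ℝ) : ℝ := ∑ i, x i * y i

/-- The partial derivative `∂/∂xᵢ` of a function on `ℝ^N`. -/
def partialDR {N : ℕ} (i : Fin N) (f : (Fin N → ℝ) → ℝ) : (Fin N → ℝ) → ℝ :=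
  fun x => deriv (fun t => f (Function.update x i t)) (x i)

/-- The pseudo-ground state `ψ₀ = ∏_{α∈𝒜}(α,x)^{−m_α} e^{−x²/2}` of the deformed
Calogero-Moser operator. -/
def pseudoGroundState {N : ℕ} (A : Finset (Fin N → ℝ)) (m : (Fin N → ℝ) → ℝ)
    (x : Fin N → ℝ) : ℝ :=
  (∏ α ∈ A, Real.rpow (dotR α x) (-(m α))) * Real.exp (-(∑ i, x i ^ 2) / 2)

end

namespace DeformedCalogeroMoser

variable {N : ℕ}

theorem sum_apply_update {ι β M : Type*} [Fintype ι] [DecidableEq ι] [AddCommGroup M]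
    (f : ι → β → M) (x : ι → β) (i : ι) (t : β) :
    ∑ j, f j (Function.update x i t j) = ∑ j, f j (x j) + (f i t - f i (x i)) := by
  rw [← add_sum_erase _ _ (mem_univ i), ← add_sum_erase _ _ (mem_univ i),
    sum_congr rfl fun j hj => by rw [Function.update_of_ne (ne_of_mem_erase hj)],
    Function.update_self]
  abel

theorem dotR_update (α x : Fin N → ℝ) (i : Fin N) (t : ℝ) :
    dotR α (Function.update x i t) = dotR α x + α i * (t - x i) := by
  rw [dotR, dotR, sum_apply_update (fun j s => α j * s)]
  ring

theorem hasDerivAt_dotR_update (α x : Fin N → ℝ) (i : Fin N) :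
    HasDerivAt (fun t => dotR α (Function.update x i t)) (α i) (x i) := by
  simp only [dotR_update]
  simpa using (((hasDerivAt_id (x i)).sub_const (x i)).const_mul (α i)).const_add (dotR α x)

theorem eventually_dotR_update_ne_zero {A : Finset (Fin N → ℝ)} {x : Fin N → ℝ}
    (hx : ∀ α ∈ A, dotR α x ≠ 0) (i : Fin N) :
    ∀ᶠ t in nhds (x i), ∀ α ∈ A, dotR α (Function.update x i t) ≠ 0 := by
  rw [Filter.eventually_all_finset]
  exact fun α hα =>
    (hasDerivAt_dotR_update α x i).continuousAt.eventually_ne (by simpa using hx α hα)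

variable (A : Finset (Fin N → ℝ)) (m : (Fin N → ℝ) → ℝ)

/-- `∇ψ₀ = ψ₀ • logGrad A m` off the hyperplanes `(α,x) = 0`. -/
noncomputable def logGrad (y : Fin N → ℝ) : Fin N → ℝ :=
  -(∑ α ∈ A, (m α / dotR α y) • α + y)

theorem logGrad_apply (y : Fin N → ℝ) (i : Fin N) :
    logGrad A m y i = -∑ α ∈ A, m α * α i / dotR α y - y i := by
  simp only [logGrad, Pi.neg_apply, Pi.add_apply, Finset.sum_apply, Pi.smul_apply, smul_eq_mul,
    div_mul_eq_mul_div]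
  ring

variable {A m}

theorem hasDerivAt_sum_sq_update (x : Fin N → ℝ) (i : Fin N) :
    HasDerivAt (fun t => ∑ j, Function.update x i t j ^ 2) (2 * x i) (x i) := by
  simp only [sum_apply_update (fun _ s => s ^ 2)]
  simpa using ((hasDerivAt_pow 2 (x i)).sub_const (x i ^ 2)).const_add (∑ j, x j ^ 2)

theorem hasDerivAt_pseudoGroundState_update {y : Fin N → ℝ} (hy : ∀ α ∈ A, dotR α y ≠ 0)
    (i : Fin N) :
    HasDerivAt (fun t => pseudoGroundState A m (Function.update y i t))
      (pseudoGroundState A m y * logGrad A m y i) (y i) := by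
  have hprod : HasDerivAt (fun t => ∏ α ∈ A, dotR α (Function.update y i t) ^ (-m α))
      ((∏ α ∈ A, dotR α y ^ (-m α)) * -∑ α ∈ A, m α * α i / dotR α y) (y i) := by
    have hfactor : ∀ α ∈ A, HasDerivAt (fun t => dotR α (Function.update y i t) ^ (-m α))
        (α i * -m α * dotR α y ^ (-m α - 1)) (y i) := fun α hα => by
      simpa using
        (hasDerivAt_dotR_update α y i).rpow_const (p := -m α) (Or.inl (by simpa using hy α hα))
    refine (HasDerivAt.fun_finsetProd hfactor).congr_deriv ?_
    simp only [Function.update_eq_self, smul_eq_mul, mul_neg, ← sum_neg_distrib, mul_sum]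
    refine sum_congr rfl fun α hα => ?_
    rw [← prod_erase_mul A _ hα, Real.rpow_sub_one (hy α hα)]
    ring
  have hexp := ((hasDerivAt_sum_sq_update y i).neg.div_const 2).exp
  refine (hprod.mul hexp).congr_deriv ?_
  simp only [pseudoGroundState, Real.rpow_eq_pow, logGrad_apply, Pi.neg_apply,
    Function.update_eq_self]
  ring

theorem hasDerivAt_logGrad_update {x : Fin N → ℝ} (hx : ∀ α ∈ A, dotR α x ≠ 0)
    (i : Fin N) :
    HasDerivAt (fun t => logGrad A m (Function.update x i t) i)
      (∑ α ∈ A, m α * α i ^ 2 / dotR α x ^ 2 - 1) (x i) := by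
  have hterm : ∀ α ∈ A, HasDerivAt (fun t => m α * α i / dotR α (Function.update x i t))
      (-(m α * α i ^ 2 / dotR α x ^ 2)) (x i) := fun α hα => by
    refine (((hasDerivAt_dotR_update α x i).inv (by simpa using hx α hα)).const_mul
      (m α * α i)).congr_deriv ?_
    simp only [Function.update_eq_self]
    ring
  simp only [logGrad_apply, Function.update_self]
  refine ((HasDerivAt.fun_sum hterm).neg.sub (hasDerivAt_id (x i))).congr_deriv ?_
  simp [sum_neg_distrib]

theorem partialDR_partialDR_pseudoGroundState {x : Fin N → ℝ}
    (hx : ∀ α ∈ A, dotR α x ≠ 0) (i : Fin N) :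
    partialDR i (partialDR i (pseudoGroundState A m)) x =
      pseudoGroundState A m x *
        (logGrad A m x i ^ 2 + (∑ α ∈ A, m α * α i ^ 2 / dotR α x ^ 2 - 1)) := by
  have hfirst : (fun t => partialDR i (pseudoGroundState A m) (Function.update x i t))
      =ᶠ[nhds (x i)] fun t => pseudoGroundState A m (Function.update x i t) *
        logGrad A m (Function.update x i t) i := by
    filter_upwards [eventually_dotR_update_ne_zero hx i] with t ht
    simpa [partialDR] using (hasDerivAt_pseudoGroundState_update ht i).deriv
  have hsecond := (hasDerivAt_pseudoGroundState_update (m := m) hx i).fun_mul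
    (hasDerivAt_logGrad_update (m := m) hx i)
  rw [partialDR, hfirst.deriv_eq, hsecond.deriv, Function.update_eq_self]
  ring

theorem logGrad_dotProduct_logGrad {x : Fin N → ℝ} (hx : ∀ α ∈ A, dotR α x ≠ 0) :
    logGrad A m x ⬝ᵥ logGrad A m x =
      ∑ α ∈ A, ∑ β ∈ A, m α * m β * dotR α β / (dotR α x * dotR β x) +
        2 * ∑ α ∈ A, m α + ∑ i, x i ^ 2 := by
  set v := ∑ α ∈ A, (m α / dotR α x) • α
  have hvv :
      v ⬝ᵥ v = ∑ α ∈ A, ∑ β ∈ A, m α * m β * dotR α β / (dotR α x * dotR β x) := by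
    simp only [v, sum_dotProduct, dotProduct_sum, smul_dotProduct, dotProduct_smul, smul_eq_mul,
      mul_sum]
    refine sum_congr rfl fun α _ => sum_congr rfl fun β _ => ?_
    rw [dotProduct_comm, show α ⬝ᵥ β = dotR α β from rfl]
    ring
  have hvx : v ⬝ᵥ x = ∑ α ∈ A, m α := by
    simp only [v, sum_dotProduct, smul_dotProduct, smul_eq_mul]
    exact sum_congr rfl fun α hα => div_mul_cancel₀ _ (hx α hα)
  have hxx : x ⬝ᵥ x = ∑ i, x i ^ 2 := by simp only [dotProduct, sq]
  calc logGrad A m x ⬝ᵥ logGrad A m x = (v + x) ⬝ᵥ (v + x) := neg_dotProduct_neg _ _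
    _ = v ⬝ᵥ v + 2 * v ⬝ᵥ x + x ⬝ᵥ x := by
      rw [add_dotProduct, dotProduct_add, dotProduct_add, dotProduct_comm x v]
      ring
    _ = _ := by rw [hvv, hvx, hxx]

theorem sum_partialDR_partialDR_pseudoGroundState {x : Fin N → ℝ}
    (hx : ∀ α ∈ A, dotR α x ≠ 0) :
    ∑ i, partialDR i (partialDR i (pseudoGroundState A m)) x =
      pseudoGroundState A m x * (logGrad A m x ⬝ᵥ logGrad A m x +
        ∑ α ∈ A, m α * dotR α α / dotR α x ^ 2 - N) := by
  have hdiv : ∑ i, ∑ α ∈ A, m α * α i ^ 2 / dotR α x ^ 2 =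
      ∑ α ∈ A, m α * dotR α α / dotR α x ^ 2 := by
    rw [sum_comm]
    refine sum_congr rfl fun α _ => ?_
    simp only [dotR, mul_sum, sum_div, sq]
  rw [sum_congr rfl fun i _ => partialDR_partialDR_pseudoGroundState hx i, ← mul_sum,
    sum_add_distrib, sum_sub_distrib, hdiv]
  simp only [dotProduct, sq, sum_const, card_univ, Fintype.card_fin, nsmul_eq_mul, mul_one]
  ring

end DeformedCalogeroMoser

theorem deformed_CM_pseudo_ground_state_general (N : ℕ) (A : Finset (Fin N → ℝ))
    (m : (Fin N → ℝ) → ℝ)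
    (hSV : ∀ x : Fin N → ℝ, (∀ α ∈ A, dotR α x ≠ 0) →
      ∑ α ∈ A, ∑ β ∈ A.erase α,
        m α * m β * dotR α β / (dotR α x * dotR β x) = 0)
    (x : Fin N → ℝ) (hx : ∀ α ∈ A, dotR α x ≠ 0) :
    -(∑ i, partialDR i (partialDR i (pseudoGroundState A m)) x) +
      ((∑ α ∈ A, m α * (m α + 1) * dotR α α / (dotR α x) ^ 2) + ∑ i, x i ^ 2) *
        pseudoGroundState A m x
      = ((N : ℝ) - 2 * ∑ α ∈ A, m α) * pseudoGroundState A m x := by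
  have hdiag : ∑ α ∈ A, ∑ β ∈ A, m α * m β * dotR α β / (dotR α x * dotR β x) =
      ∑ α ∈ A, m α * m α * dotR α α / (dotR α x * dotR α x) := by
    rw [← add_zero (∑ α ∈ A, _ / (dotR α x * dotR α x)), ← hSV x hx, ← sum_add_distrib]
    exact sum_congr rfl fun α hα => (add_sum_erase A _ hα).symm
  have hpotential : ∑ α ∈ A, m α * (m α + 1) * dotR α α / dotR α x ^ 2 =
      ∑ α ∈ A, m α * m α * dotR α α / (dotR α x * dotR α x) +
        ∑ α ∈ A, m α * dotR α α / dotR α x ^ 2 := by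
    rw [← sum_add_distrib]
    exact sum_congr rfl fun α _ => by ring
  rw [DeformedCalogeroMoser.sum_partialDR_partialDR_pseudoGroundState hx,
    DeformedCalogeroMoser.logGrad_dotProduct_logGrad hx, hdiag, hpotential]
  ring

/-- The pseudo-ground state of the deformed Calogero-Moser operator
`L_𝒜 = −Δ + ∑_{α∈𝒜} m_α(m_α+1)(α,α)/(α,x)² + x²` of a deformed root system `𝒜`
with multiplicities `m_α`.  The defining property of a deformed root system used
here is the Sergeev–Veselov identity
`∑_{α≠β∈𝒜} m_α m_β (α,β)/((α,x)(β,x)) = 0` (identity (12) of Sergeev–Veselov),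
which guarantees `L_𝒜 ψ₀ = λ₀ ψ₀` with `λ₀ = N − 2∑_{α∈𝒜} m_α` away from the
hyperplanes `(α,x)=0`. -/
theorem deformed_CM_pseudo_ground_state (N : ℕ) (A : Finset (Fin N → ℝ))
    (m : (Fin N → ℝ) → ℝ) (hA0 : ∀ α ∈ A, α ≠ 0)
    (hSV : ∀ x : Fin N → ℝ, (∀ α ∈ A, dotR α x ≠ 0) →
      ∑ α ∈ A, ∑ β ∈ A.erase α,
        m α * m β * dotR α β / (dotR α x * dotR β x) = 0)
    (x : Fin N → ℝ) (hx : ∀ α ∈ A, dotR α x ≠ 0) :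
    -(∑ i, partialDR i (partialDR i (pseudoGroundState A m)) x) +
      ((∑ α ∈ A, m α * (m α + 1) * dotR α α / (dotR α x) ^ 2) + ∑ i, x i ^ 2) *
        pseudoGroundState A m x
      = ((N : ℝ) - 2 * ∑ α ∈ A, m α) * pseudoGroundState A m x :=
  deformed_CM_pseudo_ground_state_general N A m hSV x hx
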